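/- A finitely-generated abelian group (G,+) admits a good-ordering if and only if the torsion subgroup of G is cyclic. -/

import Mathlib

/-- `r` is a good-ordering of the subset `X` of an abelian group. -/
def IsGoodOrdering {G : Type*} [AddCommGroup G] (X : Set G) (r : G → G → Prop) : Prop :=
  (∀ x ∈ X, ¬ r x x) ∧
  (∀ x ∈ X, ∀ y ∈ X, ∀ z ∈ X, r x y → r y z → r x z) ∧
  (∀ x ∈ X, ∀ y ∈ X, x ≠ y → r x y ∨ r y x) ∧
  (∀ x ∈ X, ∀ y ∈ X, x + y ∈ X → ¬ (r x (x + y) ∧ r (x + y) y))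

/-!
A good-ordering pulls back along injective homomorphisms. In a finite group with a good-ordering,
the least nonzero element `m` generates: for `a ≠ 0, m` we have `m < a`, so goodness applied to
`m + (a - m) = a` forces `a - m < a`, and well-founded induction finishes.

Conversely, comparing representatives in `[0, p)` is a good-ordering of `AddCircle p`, since the
representative of `a + b` is `u + v` or `u + v - p`. A finitely generated abelian group with cyclic
torsion is `ℤⁿ × ℤ/k`, which embeds into `ℝ/ℤ` via `eᵢ ↦ αⁱ⁺¹` for a transcendental `α` and
`1 ↦ 1/k`: no nonzero element of `ℤⁿ` lands in the torsion `ℚ/ℤ` of the circle.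
-/

namespace IsGoodOrdering

variable {G : Type*} [AddCommGroup G] {r : G → G → Prop}

theorem comap {H : Type*} [AddCommGroup H] {s : H → H → Prop}
    (hs : IsGoodOrdering Set.univ s) (f : G →+ H) (hf : Function.Injective f) :
    IsGoodOrdering Set.univ (fun x y => s (f x) (f y)) := by
  obtain ⟨irrefl, trans, total, good⟩ := hs
  refine ⟨fun x _ => irrefl (f x) trivial,
    fun x _ y _ z _ => trans _ trivial _ trivial _ trivial,
    fun x _ y _ hxy => total _ trivial _ trivial (hf.ne hxy),
    fun x _ y _ _ => ?_⟩
  simpa only [map_add] using good (f x) trivial (f y) trivial trivial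

theorem isAddCyclic [Finite G] (hr : IsGoodOrdering Set.univ r) : IsAddCyclic G := by
  obtain ⟨irrefl, trans, total, good⟩ := hr
  rcases subsingleton_or_nontrivial G with hG | hG
  · exact isAddCyclic_of_subsingleton
  obtain ⟨x₀, hx₀⟩ := exists_ne (0 : G)
  have : IsTrans G r := ⟨fun a b c => trans a trivial b trivial c trivial⟩
  have : Std.Irrefl r := ⟨fun a => irrefl a trivial⟩
  have wf : WellFounded r := Finite.wellFounded_of_trans_of_irrefl r
  set m := wf.min {x | x ≠ 0} ⟨x₀, hx₀⟩
  have hm : m ≠ 0 := wf.min_mem {x | x ≠ 0} ⟨x₀, hx₀⟩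
  refine ⟨m, fun a => wf.induction (C := fun a => ∃ c : ℤ, c • m = a) a fun a ih => ?_⟩
  rcases eq_or_ne a 0 with rfl | ha
  · exact ⟨0, zero_zsmul m⟩
  by_cases ham : a = m
  · exact ⟨1, by rw [one_zsmul, ham]⟩
  have hma : r m a := (total m trivial a trivial (Ne.symm ham)).resolve_right
    (wf.not_lt_min {x | x ≠ 0} ha)
  have hlt : r (a - m) a := by
    refine (total a trivial (a - m) trivial fun h => hm (sub_eq_self.mp h.symm)).resolve_left
      fun h => ?_
    exact good m trivial (a - m) trivial trivial (by simpa using ⟨hma, h⟩)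
  obtain ⟨c, hc⟩ := ih (a - m) hlt
  exact ⟨c + 1, by rw [add_zsmul, one_zsmul, hc, sub_add_cancel]⟩

end IsGoodOrdering

namespace AddCircle

variable {𝕜 : Type*} [Field 𝕜] [LinearOrder 𝕜] [IsStrictOrderedRing 𝕜] [Archimedean 𝕜]
  {p : 𝕜} [Fact (0 < p)]

theorem equivIco_add_eq_or (a b : AddCircle p) :
    (equivIco p 0 (a + b) : 𝕜) = equivIco p 0 a + equivIco p 0 b ∨
      (equivIco p 0 (a + b) : 𝕜) = equivIco p 0 a + equivIco p 0 b - p := by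
  obtain ⟨ha₀, ha₁⟩ : (equivIco p 0 a : 𝕜) ∈ Set.Ico 0 (0 + p) := (equivIco p 0 a).2
  obtain ⟨hb₀, hb₁⟩ : (equivIco p 0 b : 𝕜) ∈ Set.Ico 0 (0 + p) := (equivIco p 0 b).2
  have hsum : a + b = ((equivIco p 0 a + equivIco p 0 b : 𝕜) : AddCircle p) := by simp
  rcases lt_or_ge (equivIco p 0 a + equivIco p 0 b : 𝕜) p with h | h
  · left
    rw [hsum, equivIco_coe_eq ⟨by linarith, by linarith⟩]
  · right
    have hsum' : a + b = ((equivIco p 0 a + equivIco p 0 b - p : 𝕜) : AddCircle p) := by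
      rw [hsum, coe_sub, coe_period, sub_zero]
    rw [hsum', equivIco_coe_eq ⟨by linarith, by linarith⟩]

theorem isGoodOrdering_lt_equivIco :
    IsGoodOrdering Set.univ fun a b : AddCircle p => (equivIco p 0 a : 𝕜) < equivIco p 0 b := by
  have hinj : Function.Injective fun a : AddCircle p => (equivIco p 0 a : 𝕜) :=
    Subtype.val_injective.comp (equivIco p 0).injective
  refine ⟨fun a _ => lt_irrefl _, fun a _ b _ c _ => lt_trans,
    fun a _ b _ hab => lt_or_gt_of_ne (hinj.ne hab), fun a _ b _ _ => ?_⟩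
  have ha : 0 ≤ (equivIco p 0 a : 𝕜) := (equivIco p 0 a).2.1
  have hb : (equivIco p 0 b : 𝕜) < 0 + p := (equivIco p 0 b).2.2
  rcases equivIco_add_eq_or a b with h | h <;> simp only [h] <;> rintro ⟨h₁, h₂⟩ <;> linarith

end AddCircle

theorem AddMonoidHom.coprod_injective_of_isAddTorsion {A B C : Type*} [AddCommGroup A]
    [AddCommGroup B] [AddCommGroup C] (hB : IsAddTorsion B) {f : A →+ C} {g : B →+ C}
    (hf : ∀ a, IsOfFinAddOrder (f a) → a = 0) (hg : Function.Injective g) :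
    Function.Injective (f.coprod g) := by
  refine (injective_iff_map_eq_zero _).mpr fun x h => ?_
  obtain ⟨a, b⟩ := x
  replace h : f a = -g b := add_eq_zero_iff_eq_neg.mp h
  have ha : a = 0 := hf a (h ▸ (g.isOfFinAddOrder (hB b)).neg)
  rw [ha, map_zero, zero_eq_neg, ← map_zero g] at h
  rw [ha, hg h, Prod.mk_zero_zero]

theorem transcendental_rat_liouvilleNumber : Transcendental ℚ (liouvilleNumber 2) :=
  (IsFractionRing.isAlgebraic_iff ℤ ℚ ℝ).not.mp (transcendental_liouvilleNumber le_rfl)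

open Polynomial in
theorem Transcendental.eq_zero_of_isOfFinAddOrder_linearCombination_pow {α : ℝ}
    (hα : Transcendental ℚ α) {n : ℕ} {a : Fin n →₀ ℤ}
    (h : IsOfFinAddOrder
      ((Finsupp.linearCombination ℤ fun i : Fin n => α ^ (i + 1 : ℕ)) a : UnitAddCircle)) :
    a = 0 := by
  obtain ⟨q, hq⟩ := AddCircle.isOfFinAddOrder_iff_exists_rat_eq_div.mp h
  rw [div_one, Finsupp.linearCombination_apply, Finsupp.sum_fintype _ _ (by simp)] at hq
  set P : ℚ[X] := ∑ i : Fin n, C (a i : ℚ) * X ^ (i + 1 : ℕ) - C q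
  have hP : P = 0 := transcendental_iff.mp hα P (by simp [P, hq])
  ext j
  simpa [P, finsetSum_coeff, coeff_C_mul_X_pow, Fin.val_inj] using
    congr_arg (coeff · (j + 1 : ℕ)) hP

theorem AddCommGroup.exists_addEquiv_free_prod_torsion (G : Type*) [AddCommGroup G]
    [AddGroup.FG G] : ∃ n : ℕ, Nonempty (G ≃+ (Fin n →₀ ℤ) × torsion G) := by
  have : Module.Finite ℤ G := Module.Finite.iff_addGroup_fg.mpr ‹_›
  let T := Submodule.torsion ℤ G
  obtain ⟨n, ⟨eQ⟩⟩ := Module.basisOfFiniteTypeTorsionFree' (R := ℤ) (M := G ⧸ T)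
  -- `G ⧸ T` is free, hence projective, so the quotient map splits
  obtain ⟨s, hs⟩ := Module.projective_lifting_property T.mkQ LinearMap.id T.mkQ_surjective
  let e : (T × (G ⧸ T)) ≃ₗ[ℤ] G := lequivProdOfRightSplitExact T.injective_subtype
    (by rw [Submodule.range_subtype, Submodule.ker_mkQ]) hs
  exact ⟨n, ⟨e.symm.toAddEquiv.trans <| AddEquiv.prodComm.trans <|
    eQ.toAddEquiv.prodCongr (AddEquiv.addSubgroupCongr Submodule.torsion_int)⟩⟩

theorem AddCommGroup.finite_torsion (G : Type*) [AddCommGroup G] [AddGroup.FG G] :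
    Finite (torsion G) := by
  obtain ⟨n, ⟨e⟩⟩ := exists_addEquiv_free_prod_torsion G
  have : AddGroup.FG (torsion G) := AddGroup.fg_of_surjective
    (f := (AddMonoidHom.snd _ _).comp e.toAddMonoidHom) (Prod.snd_surjective.comp e.surjective)
  exact finite_of_fg_isAddTorsion _ fun x => AddSubmonoid.isOfFinAddOrder_coe.mp x.2

theorem exists_injective_prod_zmod_unitAddCircle (n k : ℕ) [NeZero k] :
    ∃ φ : (Fin n →₀ ℤ) × ZMod k →+ UnitAddCircle, Function.Injective φ :=
  let f : (Fin n →₀ ℤ) →+ UnitAddCircle := (QuotientAddGroup.mk' _).comp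
    (Finsupp.linearCombination ℤ fun i : Fin n => liouvilleNumber 2 ^ (i + 1 : ℕ)).toAddMonoidHom
  ⟨f.coprod ZMod.toAddCircle, AddMonoidHom.coprod_injective_of_isAddTorsion isAddTorsion_of_finite
    (fun _ => transcendental_rat_liouvilleNumber.eq_zero_of_isOfFinAddOrder_linearCombination_pow)
    (ZMod.toAddCircle_injective k)⟩

/-- A finitely-generated abelian group admits a good-ordering iff its torsion subgroup is
cyclic. -/
theorem goodOrdering_iff_torsion_cyclic {G : Type*} [AddCommGroup G] (hfg : AddGroup.FG G) :
    (∃ r : G → G → Prop, IsGoodOrdering (Set.univ : Set G) r) ↔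
      IsAddCyclic (AddCommGroup.torsion G) := by
  have := AddCommGroup.finite_torsion G
  constructor
  · rintro ⟨r, hr⟩
    exact (hr.comap (AddCommGroup.torsion G).subtype Subtype.val_injective).isAddCyclic
  · intro hcyc
    obtain ⟨n, ⟨e⟩⟩ := AddCommGroup.exists_addEquiv_free_prod_torsion G
    let k := Nat.card (AddCommGroup.torsion G)
    obtain ⟨φ, hφ⟩ := exists_injective_prod_zmod_unitAddCircle n k
    let ψ : G ≃+ (Fin n →₀ ℤ) × ZMod k :=
      e.trans ((AddEquiv.refl _).prodCongr (zmodAddCyclicAddEquiv hcyc).symm)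
    exact ⟨_, AddCircle.isGoodOrdering_lt_equivIco.comap (φ.comp ψ.toAddMonoidHom)
      (hφ.comp ψ.injective)⟩
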